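/- arXiv:1502.05845 — 2 statements merged into one kernel-verified Lean document; each statement's English description precedes it below -/
import Mathlib

section
/- The Young's functions F₁(x) = x·log(x+1) and F₂(x) = x·log(x + √(1+x²)) − √(1+x²) + 1 are equivalent: there exist constants a, b > 0 such that F₁(a x) ≤ F₂(x) ≤ F₁(b x) for all x ≥ 0. -/
open Real

private lemma sqrt_le_of_sq {x c : ℝ} (hc : 0 ≤ c) (h : 1 + x ^ 2 ≤ c ^ 2) :
    Real.sqrt (1 + x ^ 2) ≤ c := by
  calc Real.sqrt (1 + x ^ 2) ≤ Real.sqrt (c ^ 2) := Real.sqrt_le_sqrt h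
  _ = c := by rw [Real.sqrt_sq hc]

set_option maxHeartbeats 1000000 in
/-- The Young's functions `F₁(x) = x log(x+1)` and
`F₂(x) = x log(x+√(1+x²)) − √(1+x²) + 1` are equivalent. -/
theorem stmt_2 :
    ∃ a b : ℝ, 0 < a ∧ 0 < b ∧ ∀ x : ℝ, 0 ≤ x →
      (a * x) * Real.log (a * x + 1) ≤
          x * Real.log (x + Real.sqrt (1 + x ^ 2)) - Real.sqrt (1 + x ^ 2) + 1 ∧
      x * Real.log (x + Real.sqrt (1 + x ^ 2)) - Real.sqrt (1 + x ^ 2) + 1 ≤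
          (b * x) * Real.log (b * x + 1) := by
  refine ⟨1/8, 2, by norm_num, by norm_num, fun x hx => ?_⟩
  set s := Real.sqrt (1 + x ^ 2) with hs_def
  have hs2 : s ^ 2 = 1 + x ^ 2 := Real.sq_sqrt (by positivity)
  have hs0 : 0 ≤ s := Real.sqrt_nonneg _
  have hs1 : 1 ≤ s := by nlinarith
  have hsx : x ≤ s := by nlinarith
  have hxs_pos : 0 < x + s := by linarith
  constructor
  · -- lower bound with a = 1/8
    set L := Real.log (x + s) with hL_def
    have hlsmall : Real.log (1/8 * x + 1) ≤ x/8 := by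
      have := Real.log_le_sub_one_of_pos (show (0:ℝ) < 1/8 * x + 1 by linarith)
      linarith
    have hlsmall0 : 0 ≤ Real.log (1/8 * x + 1) := Real.log_nonneg (by linarith)
    have hLHS : (1/8 * x) * Real.log (1/8 * x + 1) ≤ x^2/64 := by
      have h1 : (1/8 * x) * Real.log (1/8 * x + 1) ≤ (1/8 * x) * (x/8) :=
        mul_le_mul_of_nonneg_left hlsmall (by linarith)
      nlinarith
    rcases le_or_gt x 1 with hx1 | hx1
    · -- 0 ≤ x ≤ 1
      have hm : Real.log (1 + x) ≤ L := Real.log_le_log (by linarith) (by linarith)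
      have ht : 1 - (1+x)⁻¹ ≤ Real.log (1 + x) := by
        have h := Real.log_le_sub_one_of_pos (show (0:ℝ) < (1+x)⁻¹ by positivity)
        rw [Real.log_inv] at h
        linarith
      have hxL : x * (1 - (1+x)⁻¹) ≤ x * L :=
        mul_le_mul_of_nonneg_left (le_trans ht hm) hx
      have hu : x + (1+x)⁻¹ - 1 = x^2/(1+x) := by
        field_simp
        ring
      have hxexp : x * (1 - (1+x)⁻¹) = x + (1+x)⁻¹ - 1 := by
        field_simp
        ring
      rcases le_or_gt x (1/2) with hx2 | hx2
      · have hsle : s ≤ 1 + x^2/2 := sqrt_le_of_sq (by positivity) (by nlinarith)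
        have hdiv : (33/64) * x^2 ≤ x^2/(1+x) := by
          rw [le_div_iff₀ (by linarith)]
          nlinarith
        linarith [hxL, hu, hxexp, hsle, hdiv, hLHS]
      · have hq : 1/4 ≤ x^2 := by nlinarith
        have hsle : s ≤ 1 + (31/64) * x^2 := sqrt_le_of_sq (by positivity)
          (by nlinarith [mul_nonneg (sq_nonneg x) (sub_nonneg.mpr hq)])
        have hdiv : (1/2) * x^2 ≤ x^2/(1+x) := by
          rw [le_div_iff₀ (by linarith)]
          nlinarith
        linarith [hxL, hu, hxexp, hsle, hdiv, hLHS]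
    · -- x > 1
      have hxpos : (0:ℝ) < x := by linarith
      have hL2x : Real.log (2*x) ≤ L := Real.log_le_log (by linarith) (by linarith)
      have hlogmul : Real.log (2*x) = Real.log 2 + Real.log x :=
        Real.log_mul (by norm_num) (by positivity)
      have hlogx : 1 - x⁻¹ ≤ Real.log x := by
        have h := Real.log_le_sub_one_of_pos (show (0:ℝ) < x⁻¹ by positivity)
        rw [Real.log_inv] at h
        linarith
      have hxlogx : x - 1 ≤ x * Real.log x := by
        have h1 := mul_le_mul_of_nonneg_left hlogx (le_of_lt hxpos)
        have h2 : x * (1 - x⁻¹) = x - 1 := by field_simp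
        linarith
      have hlog2 : (0.6931471803 : ℝ) < Real.log 2 := Real.log_two_gt_d9
      have hxL : x * Real.log (2*x) ≤ x * L := mul_le_mul_of_nonneg_left hL2x hx
      have hexp : x * Real.log (2*x) = x * Real.log 2 + x * Real.log x := by
        rw [hlogmul]; ring
      rcases le_or_gt x 2 with hx2 | hx2
      · -- 1 < x ≤ 2
        have hsle : s ≤ x + 1/2 := sqrt_le_of_sq (by linarith)
          (by have h : (x+1/2)^2 = x^2 + x + 1/4 := by ring
              linarith)
        have hxlog2 : Real.log 2 ≤ x * Real.log 2 :=
          le_mul_of_one_le_left (by linarith) (by linarith)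
        have hx2sq : x^2 ≤ 4 := by nlinarith
        linarith [hxL, hexp, hxlog2, hxlogx, hLHS, hsle]
      · -- x > 2
        have hsle : s ≤ x + 1/4 := sqrt_le_of_sq (by linarith)
          (by have h : (x+1/4)^2 = x^2 + x/2 + 1/16 := by ring
              linarith)
        have hlogx2 : Real.log 2 ≤ Real.log x := Real.log_le_log (by norm_num) (by linarith)
        have hlx : Real.log (1/8 * x + 1) ≤ Real.log x :=
          Real.log_le_log (by linarith) (by linarith)
        have hLHS2 : (1/8 * x) * Real.log (1/8 * x + 1) ≤ (1/8 * x) * Real.log x :=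
          mul_le_mul_of_nonneg_left hlx (by linarith)
        have hc : 0 ≤ Real.log 2 + (7/8) * Real.log x - 1 := by linarith
        have hxc : 0 ≤ x * (Real.log 2 + (7/8) * Real.log x - 1) := mul_nonneg hx hc
        have hexpand : x * (Real.log 2 + (7/8) * Real.log x - 1)
            = x * Real.log 2 + (7/8) * (x * Real.log x) - x := by ring
        have h18 : (1/8 * x) * Real.log x = (1/8) * (x * Real.log x) := by ring
        linarith [hxL, hexp, hxc, hexpand, hLHS2, hsle, h18]
  · -- upper bound with b = 2
    have hs_le : s ≤ x + 1 := sqrt_le_of_sq (by linarith)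
      (by have h : (x+1)^2 = x^2 + 2*x + 1 := by ring
          linarith)
    have hL : Real.log (x + s) ≤ Real.log (2*x+1) := Real.log_le_log hxs_pos (by linarith)
    have hlog0 : 0 ≤ Real.log (2*x+1) := Real.log_nonneg (by linarith)
    have h1 : x * Real.log (x + s) ≤ x * Real.log (2*x+1) := mul_le_mul_of_nonneg_left hL hx
    nlinarith [mul_nonneg hx hlog0]
end

section
/- Hardy–Littlewood submajorization is respected by decreasing rearrangement sums: for f, g measurable on a σ-finite measure space, ∫₀^α μ_t(f+g) dt ≤ ∫₀^α μ_t(f) dt + ∫₀^α μ_t(g) dt for every α > 0. -/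
/-!
For every level `c`, `∫₀^α μ_t(h) dt ≤ α c + ∫ (|h| - c)₊ dμ`, with equality at `c = μ_α(h)`.
Both integrals of the form `∫ (· - c)₊` agree because `t ↦ μ_t(h)` on `(0, ∞)` and `|h|` on `X`
have the same distribution function, so the layer-cake formula turns one into the other.
For `f + g` take `c = a + b` with `a = μ_α(f)`, `b = μ_α(g)`; then
`(|f + g| - a - b)₊ ≤ (|f| - a)₊ + (|g| - b)₊` pointwise, and the equality cases for `f` and `g`
give the inequality.
-/

open MeasureTheory
open scoped ENNReal

/-- The decreasing rearrangement of `h`: `μ_t(h) = inf{s ≥ 0 : μ({|h| > s}) ≤ t}`. -/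
noncomputable def rearr {X : Type*} [MeasurableSpace X] (μ : Measure X) (h : X → ℝ)
    (t : ℝ) : ℝ≥0∞ :=
  sInf {s : ℝ≥0∞ | μ {x | s < ENNReal.ofReal |h x|} ≤ ENNReal.ofReal t}

open Set

theorem volume_Ioi_inter_ofReal_lt (D : ℝ≥0∞) :
    volume (Ioi (0 : ℝ) ∩ {t | ENNReal.ofReal t < D}) = D := by
  rcases eq_or_ne D ∞ with rfl | hD
  · simp
  · have : Ioi (0 : ℝ) ∩ {t | ENNReal.ofReal t < D} = Ioo 0 D.toReal := by
      ext t
      simp only [mem_inter_iff, mem_Ioi, mem_Ioo, and_congr_right_iff]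
      exact fun ht => ENNReal.ofReal_lt_iff_lt_toReal ht.le hD
    rw [this, Real.volume_Ioo, sub_zero, ENNReal.ofReal_toReal hD]

theorem lintegral_eq_lintegral_meas_ofReal_lt {α : Type*} [MeasurableSpace α] (ν : Measure α)
    {F : α → ℝ≥0∞} (hF : AEMeasurable F ν) :
    ∫⁻ x, F x ∂ν = ∫⁻ s in Ioi (0 : ℝ), ν {x | ENNReal.ofReal s < F x} := by
  by_cases hinf : ν {x | F x = ∞} = 0
  · have hfin : ∀ᵐ x ∂ν, F x ≠ ∞ := measure_eq_zero_iff_ae_notMem.mp hinf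
    rw [lintegral_congr_ae (hfin.mono fun x hx => (ENNReal.ofReal_toReal hx).symm),
      lintegral_eq_lintegral_meas_lt ν (ae_of_all _ fun _ => ENNReal.toReal_nonneg)
        hF.ennreal_toReal]
    refine setLIntegral_congr_fun measurableSet_Ioi fun s hs => measure_congr ?_
    filter_upwards [hfin] with x hx
    exact propext (ENNReal.ofReal_lt_iff_lt_toReal (le_of_lt hs) hx).symm
  · refine (lintegral_eq_top_of_measure_eq_top_ne_zero hF hinf).trans (eq_top_iff.mpr ?_).symm
    calc ∞ = ∫⁻ _ in Ioi (0 : ℝ), ν {x | F x = ∞} := by simp [hinf]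
      _ ≤ _ := lintegral_mono fun s => measure_mono fun x (hx : F x = ∞) => by simp [hx]

section Rearrangement

variable {X : Type*} [MeasurableSpace X] (μ : Measure X) (h : X → ℝ)

theorem rearr_antitone : Antitone (rearr μ h) := fun _ _ hst =>
  sInf_le_sInf fun _ hs => hs.trans (ENNReal.ofReal_le_ofReal hst)

theorem measurable_rearr : Measurable (rearr μ h) := (rearr_antitone μ h).measurable

/-- The infimum defining `rearr` is attained: continuity from below along `{s_n < |h|}`. -/
theorem measure_rearr_lt_le (t : ℝ) :
    μ {x | rearr μ h t < ENNReal.ofReal |h x|} ≤ ENNReal.ofReal t := by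
  set S := {s : ℝ≥0∞ | μ {x | s < ENNReal.ofReal |h x|} ≤ ENNReal.ofReal t}
  have htop : ∞ ∈ S := by simp [S]
  obtain ⟨u, hu_anti, hu_lim, hu_mem⟩ := exists_seq_tendsto_sInf ⟨∞, htop⟩ (OrderBot.bddBelow S)
  have hunion : {x | sInf S < ENNReal.ofReal |h x|} = ⋃ n, {x | u n < ENNReal.ofReal |h x|} := by
    ext x
    simp only [mem_iUnion]
    refine ⟨fun hx => (hu_lim.eventually (gt_mem_nhds hx)).exists, ?_⟩
    rintro ⟨n, hn⟩
    exact (sInf_le (hu_mem n)).trans_lt hn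
  have hmono : Monotone fun n => {x | u n < ENNReal.ofReal |h x|} :=
    fun _ _ hnm _ hx => (hu_anti hnm).trans_lt hx
  change μ {x | sInf S < _} ≤ _
  rw [hunion, hmono.measure_iUnion]
  exact iSup_le hu_mem

theorem lt_rearr_iff (t : ℝ) (u : ℝ≥0∞) :
    u < rearr μ h t ↔ ENNReal.ofReal t < μ {x | u < ENNReal.ofReal |h x|} := by
  refine ⟨fun hu => not_le.mp fun hle => hu.not_ge (sInf_le hle : rearr μ h t ≤ u),
    fun hlt => not_le.mp fun hle => ?_⟩
  exact hlt.not_ge ((measure_mono fun x (hx : u < _) => hle.trans_lt hx).trans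
    (measure_rearr_lt_le μ h t))

theorem volume_Ioi_lt_rearr (u : ℝ≥0∞) :
    volume.restrict (Ioi 0) {t | u < rearr μ h t} = μ {x | u < ENNReal.ofReal |h x|} := by
  rw [Measure.restrict_apply' measurableSet_Ioi, inter_comm]
  simp only [lt_rearr_iff]
  exact volume_Ioi_inter_ofReal_lt _

variable {h}

theorem setLIntegral_Ioi_rearr_tsub (hm : Measurable h) (c : ℝ≥0∞) :
    ∫⁻ t in Ioi 0, (rearr μ h t - c) = ∫⁻ x, (ENNReal.ofReal |h x| - c) ∂μ := by
  rw [lintegral_eq_lintegral_meas_ofReal_lt _ ((measurable_rearr μ h).sub_const c).aemeasurable,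
    lintegral_eq_lintegral_meas_ofReal_lt μ (hm.abs.ennreal_ofReal.sub_const c).aemeasurable]
  simp only [lt_tsub_iff_right, volume_Ioi_lt_rearr]

theorem setLIntegral_Ioc_const_add_rearr_tsub (α : ℝ) (c : ℝ≥0∞) :
    ∫⁻ t in Ioc 0 α, (c + (rearr μ h t - c))
      = ENNReal.ofReal α * c + ∫⁻ t in Ioc 0 α, (rearr μ h t - c) := by
  rw [lintegral_add_left measurable_const, setLIntegral_const, Real.volume_Ioc, sub_zero, mul_comm]

theorem setLIntegral_Ioc_rearr_le (hm : Measurable h) (α : ℝ) (c : ℝ≥0∞) :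
    ∫⁻ t in Ioc 0 α, rearr μ h t
      ≤ ENNReal.ofReal α * c + ∫⁻ x, (ENNReal.ofReal |h x| - c) ∂μ := by
  rw [← setLIntegral_Ioi_rearr_tsub μ hm c]
  calc ∫⁻ t in Ioc 0 α, rearr μ h t
      ≤ ∫⁻ t in Ioc 0 α, (c + (rearr μ h t - c)) := lintegral_mono fun _ => le_add_tsub
    _ = ENNReal.ofReal α * c + ∫⁻ t in Ioc 0 α, (rearr μ h t - c) :=
        setLIntegral_Ioc_const_add_rearr_tsub μ α c
    _ ≤ ENNReal.ofReal α * c + ∫⁻ t in Ioi 0, (rearr μ h t - c) :=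
        add_le_add_right (lintegral_mono_set Ioc_subset_Ioi_self) _

/-- Equality in `setLIntegral_Ioc_rearr_le` at `c = rearr μ h α`: as `rearr μ h` is antitone,
`rearr μ h t - c` vanishes for `t > α` and `c ≤ rearr μ h t` for `t ≤ α`. -/
theorem setLIntegral_Ioc_rearr_eq (hm : Measurable h) {α : ℝ} (hα : 0 ≤ α) :
    ∫⁻ t in Ioc 0 α, rearr μ h t
      = ENNReal.ofReal α * rearr μ h α + ∫⁻ x, (ENNReal.ofReal |h x| - rearr μ h α) ∂μ := by
  set c := rearr μ h α
  have htail : ∫⁻ t in Ioi α, (rearr μ h t - c) = 0 := by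
    rw [setLIntegral_congr_fun measurableSet_Ioi fun t (ht : α < t) =>
      tsub_eq_zero_of_le (rearr_antitone μ h ht.le), lintegral_zero]
  rw [← setLIntegral_Ioi_rearr_tsub μ hm c, ← Ioc_union_Ioi_eq_Ioi hα,
    lintegral_union measurableSet_Ioi (Ioc_disjoint_Ioi le_rfl), htail, add_zero,
    ← setLIntegral_Ioc_const_add_rearr_tsub]
  exact setLIntegral_congr_fun measurableSet_Ioc fun t ht =>
    (add_tsub_cancel_of_le (rearr_antitone μ h ht.2)).symm

end Rearrangement

theorem stmt_17_general {X : Type*} [MeasurableSpace X] (μ : Measure X)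
    (f g : X → ℝ) (hf : Measurable f) (hg : Measurable g) :
    ∀ α : ℝ, 0 < α →
      ∫⁻ t in Set.Ioc (0:ℝ) α, rearr μ (f + g) t ≤
        (∫⁻ t in Set.Ioc (0:ℝ) α, rearr μ f t) +
          ∫⁻ t in Set.Ioc (0:ℝ) α, rearr μ g t := by
  intro α hα
  set a := rearr μ f α
  set b := rearr μ g α
  have hsplit : ∀ x, ENNReal.ofReal |(f + g) x| - (a + b)
      ≤ (ENNReal.ofReal |f x| - a) + (ENNReal.ofReal |g x| - b) := fun x =>
    calc ENNReal.ofReal |(f + g) x| - (a + b)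
        ≤ (ENNReal.ofReal |f x| + ENNReal.ofReal |g x|) - (a + b) := by
          gcongr
          rw [← ENNReal.ofReal_add (abs_nonneg _) (abs_nonneg _)]
          exact ENNReal.ofReal_le_ofReal (abs_add_le _ _)
      _ ≤ _ := add_tsub_add_le_tsub_add_tsub
  calc ∫⁻ t in Ioc 0 α, rearr μ (f + g) t
      ≤ ENNReal.ofReal α * (a + b) + ∫⁻ x, (ENNReal.ofReal |(f + g) x| - (a + b)) ∂μ :=
        setLIntegral_Ioc_rearr_le μ (hf.add hg) α (a + b)
    _ ≤ ENNReal.ofReal α * (a + b)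
          + ∫⁻ x, ((ENNReal.ofReal |f x| - a) + (ENNReal.ofReal |g x| - b)) ∂μ := by
        gcongr with x
        exact hsplit x
    _ = (ENNReal.ofReal α * a + ∫⁻ x, (ENNReal.ofReal |f x| - a) ∂μ)
          + (ENNReal.ofReal α * b + ∫⁻ x, (ENNReal.ofReal |g x| - b) ∂μ) := by
        rw [lintegral_add_left (hf.abs.ennreal_ofReal.sub_const a), mul_add]
        ring
    _ = (∫⁻ t in Ioc 0 α, rearr μ f t) + ∫⁻ t in Ioc 0 α, rearr μ g t := by
        rw [setLIntegral_Ioc_rearr_eq μ hf hα.le, setLIntegral_Ioc_rearr_eq μ hg hα.le]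

/-- Hardy–Littlewood submajorization: for measurable `f, g` on a σ-finite measure space and
every `α > 0`, `∫₀^α μ_t(f+g) dt ≤ ∫₀^α μ_t(f) dt + ∫₀^α μ_t(g) dt`. -/
theorem stmt_17 {X : Type*} [MeasurableSpace X] (μ : Measure X) [SigmaFinite μ]
    (f g : X → ℝ) (hf : Measurable f) (hg : Measurable g) :
    ∀ α : ℝ, 0 < α →
      ∫⁻ t in Set.Ioc (0:ℝ) α, rearr μ (f + g) t ≤
        (∫⁻ t in Set.Ioc (0:ℝ) α, rearr μ f t) +
          ∫⁻ t in Set.Ioc (0:ℝ) α, rearr μ g t :=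
  stmt_17_general μ f g hf hg
end
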